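/- arXiv:math/0604278 — 6 statements merged into one kernel-verified Lean document; each statement's English description precedes it below -/
import Mathlib

section
/- If a > 0, then the Euler–Baxter curve C = {(x,y) ∈ ℝ² : x²y² + 1 + a(x² + y²) + 2bxy = 0} is a bounded subset of ℝ², for every real b. -/
/-- If `a > 0`, the Euler–Baxter curve
`C = {(x,y) : x²y² + 1 + a(x²+y²) + 2bxy = 0}` is a bounded subset of `ℝ²`,
for every real `b`. -/
theorem euler_baxter_curve_bounded (a b : ℝ) (ha : 0 < a) :
    Bornology.IsBounded
      {p : ℝ × ℝ |
        p.1 ^ 2 * p.2 ^ 2 + 1 + a * (p.1 ^ 2 + p.2 ^ 2) + 2 * b * p.1 * p.2 = 0} := by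
  refine (Metric.isBounded_closedBall (x := (0 : ℝ × ℝ))
    (r := Real.sqrt (b ^ 2 / a))).subset ?_
  rintro ⟨x, y⟩ h
  simp only [Set.mem_setOf_eq] at h
  have hx2 : x ^ 2 ≤ b ^ 2 / a := by
    rw [le_div_iff₀ ha]; nlinarith [sq_nonneg (x * y + b), sq_nonneg y]
  have hy2 : y ^ 2 ≤ b ^ 2 / a := by
    rw [le_div_iff₀ ha]; nlinarith [sq_nonneg (x * y + b), sq_nonneg x]
  have hx : |x| ≤ Real.sqrt (b ^ 2 / a) := by
    rw [← Real.sqrt_sq_eq_abs]; exact Real.sqrt_le_sqrt hx2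
  have hy : |y| ≤ Real.sqrt (b ^ 2 / a) := by
    rw [← Real.sqrt_sq_eq_abs]; exact Real.sqrt_le_sqrt hy2
  simpa [Prod.norm_def, Real.norm_eq_abs] using max_le hx hy
end

section
/- Assume a > 0. The Euler–Baxter curve C is nonempty if and only if |b| ≥ a + 1. In particular, under the paper's nondegeneracy condition (|b| − a)² > 1, the curve C is nonempty exactly when |b| > a + 1, and C is empty when |b| < a − 1. -/
/-- Assume `a > 0`. The Euler–Baxter curve `C` is nonempty iff `|b| ≥ a + 1`.
In particular, under the nondegeneracy condition `(|b| - a)² > 1`, the curve `C`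
is nonempty exactly when `|b| > a + 1`, and `C` is empty when `|b| < a - 1`. -/
theorem euler_baxter_curve_nonempty_iff (a b : ℝ) (ha : 0 < a) :
    ({p : ℝ × ℝ |
        p.1 ^ 2 * p.2 ^ 2 + 1 + a * (p.1 ^ 2 + p.2 ^ 2) + 2 * b * p.1 * p.2 = 0}.Nonempty
      ↔ a + 1 ≤ |b|) ∧
    ((|b| - a) ^ 2 > 1 →
      ({p : ℝ × ℝ |
          p.1 ^ 2 * p.2 ^ 2 + 1 + a * (p.1 ^ 2 + p.2 ^ 2) + 2 * b * p.1 * p.2 = 0}.Nonempty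
        ↔ a + 1 < |b|)) ∧
    (|b| < a - 1 →
      {p : ℝ × ℝ |
        p.1 ^ 2 * p.2 ^ 2 + 1 + a * (p.1 ^ 2 + p.2 ^ 2) + 2 * b * p.1 * p.2 = 0} = ∅) := by
  have main : ({p : ℝ × ℝ |
        p.1 ^ 2 * p.2 ^ 2 + 1 + a * (p.1 ^ 2 + p.2 ^ 2) + 2 * b * p.1 * p.2 = 0}.Nonempty
      ↔ a + 1 ≤ |b|) := by
    constructor
    · rintro ⟨⟨x, y⟩, h⟩
      simp only [Set.mem_setOf_eq] at h
      set t := x * y with ht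
      have h' : t ^ 2 + 1 + a * (x ^ 2 + y ^ 2) + 2 * b * t = 0 := by
        rw [ht]; linear_combination h
      have h2 : x ^ 2 + y ^ 2 ≥ 2 * |t| := by
        rcases abs_cases t with ⟨he, _⟩ | ⟨he, _⟩ <;> nlinarith [sq_nonneg (x - y), sq_nonneg (x + y)]
      have hbt : 2 * b * t ≥ -(2 * |b| * |t|) := by
        have := neg_abs_le (2 * b * t)
        have : |2 * b * t| = 2 * |b| * |t| := by
          rw [abs_mul, abs_mul]; simp [abs_of_nonneg]
        nlinarith [neg_abs_le (2 * b * t)]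
      have ht0 : |t| ≠ 0 := by
        intro h0
        have : t = 0 := abs_eq_zero.mp h0
        rw [this] at h'
        have := mul_nonneg ha.le (add_nonneg (sq_nonneg x) (sq_nonneg y))
        nlinarith
      have htpos : 0 < |t| := lt_of_le_of_ne (abs_nonneg t) (Ne.symm ht0)
      have key : 2 * |t| * (a + 1) ≤ 2 * |b| * |t| := by
        nlinarith [sq_abs t, sq_nonneg (|t| - 1), h']
      nlinarith [key, htpos]
    · intro hb
      set c := |b| - a with hc
      have hc1 : 1 ≤ c := by simp [hc]; linarith
      set s := Real.sqrt (c ^ 2 - 1) with hs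
      have hs0 : 0 ≤ s := Real.sqrt_nonneg _
      have hs2 : s ^ 2 = c ^ 2 - 1 := Real.sq_sqrt (by nlinarith)
      set t := c + s with htdef
      have htpos : 0 < t := by positivity
      have hkey : t ^ 2 + 1 = 2 * c * t := by
        simp only [htdef]; nlinarith
      set x := Real.sqrt t with hx
      have hx2 : x ^ 2 = t := Real.sq_sqrt htpos.le
      rcases le_or_gt 0 b with hb0 | hb0
      · refine ⟨(x, -x), ?_⟩
        simp only [Set.mem_setOf_eq]
        have hab : |b| = b := abs_of_nonneg hb0
        have : x * (-x) = -t := by nlinarith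
        nlinarith
      · refine ⟨(x, x), ?_⟩
        simp only [Set.mem_setOf_eq]
        have hab : |b| = -b := abs_of_neg hb0
        nlinarith
  refine ⟨main, ?_, ?_⟩
  · intro hnd
    rw [main]
    constructor
    · intro h
      nlinarith [sq_nonneg (|b| - a - 1)]
    · intro h; linarith
  · intro hb
    rw [← Set.not_nonempty_iff_eq_empty]
    rw [main]
    intro h
    have := abs_nonneg b
    linarith
end

section
/- For all real x, y with F(x,y) = 0, the point (u,v) = V(x,y) = (x+y, xy) satisfies v² + a·u² + 2(b − a)·v + 1 = 0; that is, V maps the Euler–Baxter curve C into the conic B. -/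
/-- For all real `x, y` with `F(x,y) = 0`, the point `(u,v) = V(x,y) = (x+y, xy)`
satisfies `v² + a·u² + 2(b-a)·v + 1 = 0`; that is, `V` maps the Euler–Baxter curve
`C` into the conic `B`. -/
theorem V_maps_curve_to_conic (a b x y : ℝ)
    (h : x ^ 2 * y ^ 2 + 1 + a * (x ^ 2 + y ^ 2) + 2 * b * x * y = 0) :
    (x * y) ^ 2 + a * (x + y) ^ 2 + 2 * (b - a) * (x * y) + 1 = 0 := by
  nlinarith [h]
end

section
/- If (x₁, y₀) and (x₂, y₀) are two points of the Euler–Baxter curve C lying on a common horizontal line y = y₀ (one step of the John algorithm), then their images V(x₁, y₀) and V(x₂, y₀) both lie on the conic B and both lie on the line L_{y₀} = {v = y₀·u − y₀²}, which is tangent to the parabola D. Thus one step of the John algorithm on C corresponds to one step of the Poncelet algorithm for the pair of conics (D, B). -/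
/-- If `(x₁, y₀)` and `(x₂, y₀)` are two points of the Euler–Baxter curve `C`
on a common horizontal line `y = y₀` (one step of the John algorithm), then
their images `V(x₁,y₀)` and `V(x₂,y₀)` both lie on the conic `B` and on the
line `L_{y₀} = {v = y₀·u - y₀²}`, which is tangent to the parabola `D`
(it meets `D` exactly at `(2y₀, y₀²)`). -/
theorem john_step_is_poncelet_step (a b x₁ x₂ y₀ : ℝ)
    (h₁ : x₁ ^ 2 * y₀ ^ 2 + 1 + a * (x₁ ^ 2 + y₀ ^ 2) + 2 * b * x₁ * y₀ = 0)
    (h₂ : x₂ ^ 2 * y₀ ^ 2 + 1 + a * (x₂ ^ 2 + y₀ ^ 2) + 2 * b * x₂ * y₀ = 0) :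
    ((x₁ + y₀, x₁ * y₀) ∈
        {q : ℝ × ℝ | q.2 ^ 2 + a * q.1 ^ 2 + 2 * (b - a) * q.2 + 1 = 0}
          ∩ {q : ℝ × ℝ | q.2 = y₀ * q.1 - y₀ ^ 2}) ∧
    ((x₂ + y₀, x₂ * y₀) ∈
        {q : ℝ × ℝ | q.2 ^ 2 + a * q.1 ^ 2 + 2 * (b - a) * q.2 + 1 = 0}
          ∩ {q : ℝ × ℝ | q.2 = y₀ * q.1 - y₀ ^ 2}) ∧
    ({q : ℝ × ℝ | q.2 = y₀ * q.1 - y₀ ^ 2} ∩ {q : ℝ × ℝ | q.2 = q.1 ^ 2 / 4}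
      = {(2 * y₀, y₀ ^ 2)}) := by
  refine ⟨⟨by simp only [Set.mem_setOf_eq]; nlinarith, by simp only [Set.mem_setOf_eq]; ring⟩,
    ⟨by simp only [Set.mem_setOf_eq]; nlinarith, by simp only [Set.mem_setOf_eq]; ring⟩, ?_⟩
  ext ⟨u, v⟩
  simp only [Set.mem_inter_iff, Set.mem_setOf_eq, Set.mem_singleton_iff, Prod.mk.injEq]
  constructor
  · rintro ⟨h1, h2⟩
    have hu : (u - 2 * y₀) ^ 2 = 0 := by nlinarith
    have : u = 2 * y₀ := by nlinarith [sq_nonneg (u - 2 * y₀)]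
    constructor
    · exact this
    · rw [h1, this]; ring
  · rintro ⟨hu, hv⟩
    subst hu; subst hv
    constructor <;> ring
end

section
/- Assume a > 0. The map I₂(x,y) = (−2by/(y² + a) − x, y) is an involution of ℝ² mapping the Euler–Baxter curve C into itself, and the John map T = I₂ ∘ I₁ restricts to a bijection of C onto itself, with inverse given by the restriction of I₁ ∘ I₂. -/
lemma ebc_mem2 (a b : ℝ) (ha : 0 < a) (x y : ℝ)
    (h : x ^ 2 * y ^ 2 + 1 + a * (x ^ 2 + y ^ 2) + 2 * b * x * y = 0) :
    (-2 * b * y / (y ^ 2 + a) - x) ^ 2 * y ^ 2 + 1 +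
      a * ((-2 * b * y / (y ^ 2 + a) - x) ^ 2 + y ^ 2) +
      2 * b * (-2 * b * y / (y ^ 2 + a) - x) * y = 0 := by
  have hd : y ^ 2 + a ≠ 0 := by positivity
  have key : (-2 * b * y / (y ^ 2 + a) - x) ^ 2 * y ^ 2 + 1 +
      a * ((-2 * b * y / (y ^ 2 + a) - x) ^ 2 + y ^ 2) +
      2 * b * (-2 * b * y / (y ^ 2 + a) - x) * y =
      x ^ 2 * y ^ 2 + 1 + a * (x ^ 2 + y ^ 2) + 2 * b * x * y := by
    field_simp
    ring
  rw [key, h]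

lemma ebc_mem1 (a b : ℝ) (ha : 0 < a) (x y : ℝ)
    (h : x ^ 2 * y ^ 2 + 1 + a * (x ^ 2 + y ^ 2) + 2 * b * x * y = 0) :
    x ^ 2 * (-2 * b * x / (x ^ 2 + a) - y) ^ 2 + 1 +
      a * (x ^ 2 + (-2 * b * x / (x ^ 2 + a) - y) ^ 2) +
      2 * b * x * (-2 * b * x / (x ^ 2 + a) - y) = 0 := by
  linarith [ebc_mem2 a b ha y x (by linarith)]

/-- Assume `a > 0`. The map `I₂(x,y) = (-2by/(y²+a) - x, y)` is an involution of
`ℝ²` mapping the Euler–Baxter curve `C` into itself, and the John map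
`T = I₂ ∘ I₁` restricts to a bijection of `C` onto itself, with inverse given by
the restriction of `I₁ ∘ I₂`. -/
theorem john_map_bijection (a b : ℝ) (ha : 0 < a) :
    (∀ p : ℝ × ℝ,
      (fun q : ℝ × ℝ => (-2 * b * q.2 / (q.2 ^ 2 + a) - q.1, q.2))
        ((fun q : ℝ × ℝ => (-2 * b * q.2 / (q.2 ^ 2 + a) - q.1, q.2)) p) = p) ∧
    (∀ p : ℝ × ℝ,
      p ∈ {p : ℝ × ℝ |
          p.1 ^ 2 * p.2 ^ 2 + 1 + a * (p.1 ^ 2 + p.2 ^ 2) + 2 * b * p.1 * p.2 = 0} →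
      (fun q : ℝ × ℝ => (-2 * b * q.2 / (q.2 ^ 2 + a) - q.1, q.2)) p ∈
        {p : ℝ × ℝ |
          p.1 ^ 2 * p.2 ^ 2 + 1 + a * (p.1 ^ 2 + p.2 ^ 2) + 2 * b * p.1 * p.2 = 0}) ∧
    Set.BijOn
      ((fun q : ℝ × ℝ => (-2 * b * q.2 / (q.2 ^ 2 + a) - q.1, q.2)) ∘
        (fun q : ℝ × ℝ => (q.1, -2 * b * q.1 / (q.1 ^ 2 + a) - q.2)))
      {p : ℝ × ℝ |
        p.1 ^ 2 * p.2 ^ 2 + 1 + a * (p.1 ^ 2 + p.2 ^ 2) + 2 * b * p.1 * p.2 = 0}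
      {p : ℝ × ℝ |
        p.1 ^ 2 * p.2 ^ 2 + 1 + a * (p.1 ^ 2 + p.2 ^ 2) + 2 * b * p.1 * p.2 = 0} ∧
    Set.InvOn
      ((fun q : ℝ × ℝ => (q.1, -2 * b * q.1 / (q.1 ^ 2 + a) - q.2)) ∘
        (fun q : ℝ × ℝ => (-2 * b * q.2 / (q.2 ^ 2 + a) - q.1, q.2)))
      ((fun q : ℝ × ℝ => (-2 * b * q.2 / (q.2 ^ 2 + a) - q.1, q.2)) ∘
        (fun q : ℝ × ℝ => (q.1, -2 * b * q.1 / (q.1 ^ 2 + a) - q.2)))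
      {p : ℝ × ℝ |
        p.1 ^ 2 * p.2 ^ 2 + 1 + a * (p.1 ^ 2 + p.2 ^ 2) + 2 * b * p.1 * p.2 = 0}
      {p : ℝ × ℝ |
        p.1 ^ 2 * p.2 ^ 2 + 1 + a * (p.1 ^ 2 + p.2 ^ 2) + 2 * b * p.1 * p.2 = 0} := by
  set I2 : ℝ × ℝ → ℝ × ℝ := fun q => (-2 * b * q.2 / (q.2 ^ 2 + a) - q.1, q.2) with hI2
  set I1 : ℝ × ℝ → ℝ × ℝ := fun q => (q.1, -2 * b * q.1 / (q.1 ^ 2 + a) - q.2) with hI1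
  set C := {p : ℝ × ℝ |
      p.1 ^ 2 * p.2 ^ 2 + 1 + a * (p.1 ^ 2 + p.2 ^ 2) + 2 * b * p.1 * p.2 = 0} with hC
  have inv2 : ∀ p : ℝ × ℝ, I2 (I2 p) = p := by
    intro p
    simp only [hI2]
    exact Prod.ext (by ring) rfl
  have inv1 : ∀ p : ℝ × ℝ, I1 (I1 p) = p := by
    intro p
    simp only [hI1]
    exact Prod.ext rfl (by ring)
  have map2 : Set.MapsTo I2 C C := fun p hp => ebc_mem2 a b ha p.1 p.2 hp
  have map1 : Set.MapsTo I1 C C := fun p hp => ebc_mem1 a b ha p.1 p.2 hp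
  have mapT : Set.MapsTo (I2 ∘ I1) C C := map2.comp map1
  have mapS : Set.MapsTo (I1 ∘ I2) C C := map1.comp map2
  have hleft : ∀ p : ℝ × ℝ, (I1 ∘ I2) ((I2 ∘ I1) p) = p := by
    intro p
    simp only [Function.comp_apply, inv2, inv1]
  have hright : ∀ p : ℝ × ℝ, (I2 ∘ I1) ((I1 ∘ I2) p) = p := by
    intro p
    simp only [Function.comp_apply, inv1, inv2]
  have hInv : Set.InvOn (I1 ∘ I2) (I2 ∘ I1) C C :=
    ⟨fun p _ => hleft p, fun p _ => hright p⟩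
  exact ⟨inv2, fun p hp => map2 hp, hInv.bijOn mapT mapS, hInv⟩
end

section
/- Assume a > 0 and |b| > a + 1, and let Ω be a nonempty bounded open subset of ℝ² whose topological frontier equals C. If the John map T is periodic on C (there exists an integer N ≥ 1 with T^N(p) = p for all p ∈ C), then the real vector space of solutions of the homogeneous Dirichlet problem for the string equation on Ω is infinite-dimensional; i.e., there exists an infinite linearly independent family of such solutions. -/
/-- The Euler–Baxter curve. -/
def EBcurve (a b : ℝ) : Set (ℝ × ℝ) :=
  {p : ℝ × ℝ | p.1 ^ 2 * p.2 ^ 2 + 1 + a * (p.1 ^ 2 + p.2 ^ 2) + 2 * b * p.1 * p.2 = 0}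

/-- The John map `T = I₂ ∘ I₁` built from the two John involutions. -/
noncomputable def johnMap (a b : ℝ) : ℝ × ℝ → ℝ × ℝ :=
  (fun q : ℝ × ℝ => (-2 * b * q.2 / (q.2 ^ 2 + a) - q.1, q.2)) ∘
    (fun q : ℝ × ℝ => (q.1, -2 * b * q.1 / (q.1 ^ 2 + a) - q.2))

/-- A solution of the homogeneous Dirichlet problem for the string equation on `Ω`:
continuous on the closure of `Ω`, twice continuously differentiable on `Ω`,
satisfying `∂²Φ/∂x∂y = 0` on `Ω`, and vanishing on the curve `C`. -/
def IsDirichletSolution (a b : ℝ) (Ω : Set (ℝ × ℝ)) (Φ : ℝ × ℝ → ℝ) : Prop :=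
  ContinuousOn Φ (closure Ω) ∧ ContDiffOn ℝ 2 Φ Ω ∧
    (∀ p ∈ Ω, deriv (fun x : ℝ => deriv (fun y : ℝ => Φ (x, y)) p.2) p.1 = 0) ∧
    ∀ p ∈ EBcurve a b, Φ p = 0

/-!
A function `V` on the plane that is invariant under `I₁` and `I₂` on `C` has well-defined traces
`f(x) = V(x, y)` and `h(y) = V(x, y)` for `(x, y) ∈ C`, because a vertical line meets `C` in an
`I₁`-orbit and a horizontal line in an `I₂`-orbit. Then `φ(f(x)) - φ(h(y))` vanishes on `C` and
has zero mixed derivative. It is smooth in `Ω`: every vertical and horizontal line through a point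
of `Ω` meets the frontier `C` on both sides, so it avoids the folds of `C`, the only places where
the branch `x ↦ y(x)` of `C` is not smooth.

Periodicity of `T = I₂ ∘ I₁` makes such `V` plentiful: averaging any smooth weight `w` over the
finite orbits of the group generated by `I₁` and `I₂` gives one. A weight vanishing exactly on the
abscissae of the orbit of a point `p₀ ∈ C` lying above a point of `Ω` makes `f` nonconstant on a
horizontal segment in `Ω`. A polynomial vanishing on the infinitely many values that `f` takes
there is zero, so the solutions `f(x)^(n+1) - h(y)^(n+1)` are linearly independent.
-/

open Set Function Finset Polynomial

theorem exists_pos_add_smul_mem_frontier {E : Type*} [NormedAddCommGroup E] [NormedSpace ℝ E]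
    {Ω : Set E} (hop : IsOpen Ω) (hbd : Bornology.IsBounded Ω) {z v : E} (hz : z ∈ Ω)
    (hv : v ≠ 0) : ∃ t : ℝ, 0 < t ∧ z + t • v ∈ frontier Ω := by
  set ray := (fun t : ℝ => z + t • v) '' Ici 0
  have hray : IsPreconnected ray := isPreconnected_Ici.image _ (by fun_prop)
  have hz_ray : z ∈ ray := ⟨0, self_mem_Ici, by simp⟩
  obtain ⟨R, hR⟩ := hbd.subset_closedBall z
  have hleave : ¬ ray ⊆ Ω := fun h => by
    have hmem := hR (h ⟨(|R| + 1) / ‖v‖, show (0 : ℝ) ≤ _ by positivity, rfl⟩)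
    rw [Metric.mem_closedBall, dist_eq_norm, add_sub_cancel_left, norm_smul,
      Real.norm_of_nonneg (by positivity), div_mul_cancel₀ _ (norm_ne_zero_iff.2 hv)] at hmem
    linarith [le_abs_self R]
  by_contra! hfr
  refine hleave (hray.subset_left_of_subset_union hop isClosed_closure.isOpen_compl
    (disjoint_compl_right_iff_subset.2 subset_closure) ?_ ⟨z, hz_ray, hz⟩)
  rintro _ ⟨t, ht, rfl⟩
  by_cases hΩ : z + t • v ∈ Ω
  · exact Or.inl hΩ
  refine Or.inr fun hcl => ?_
  rcases (mem_Ici.1 ht).eq_or_lt with rfl | ht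
  · exact hΩ (by simpa using hz)
  · exact hfr t ht ⟨hcl, by rwa [hop.interior_eq]⟩

theorem Function.IsPeriodicPt.birkhoffSum_apply_eq {α M : Type*} [AddCancelCommMonoid M]
    {f : α → α} {n : ℕ} {x : α} (h : IsPeriodicPt f n x) (g : α → M) :
    birkhoffSum f g n (f x) = birkhoffSum f g n x := by
  have hsucc := birkhoffSum_succ' f g n x
  rw [birkhoffSum_succ, h.eq, add_comm] at hsucc
  exact (add_left_cancel hsucc).symm

theorem linearIndependent_pow_succ_sub_pow {ι : Type*} {u : ι → ℝ} (hu : (range u).Infinite)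
    (c : ℝ) : LinearIndependent ℝ (fun n : ℕ => fun i => u i ^ (n + 1) - c ^ (n + 1)) := by
  set P : ℕ → ℝ[X] := fun n => X ^ (n + 1) - C (c ^ (n + 1))
  have hP : LinearIndependent ℝ P := by
    refine linearIndependent_iff'.2 fun s g hg i hi => ?_
    simpa only [P, finsetSum_coeff, coeff_smul, coeff_sub, coeff_X_pow, coeff_C,
      Nat.add_one_ne_zero, if_false, sub_zero, add_left_inj, smul_eq_mul, mul_ite, mul_one,
      mul_zero, sum_ite_eq, if_pos hi, coeff_zero] using congrArg (coeff · (i + 1)) hg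
  set ev : ℝ[X] →ₗ[ℝ] ι → ℝ := LinearMap.pi fun i => leval (u i)
  have hev : LinearMap.ker ev = ⊥ := by
    refine LinearMap.ker_eq_bot'.2 fun p hp => eq_zero_of_infinite_isRoot p (hu.mono ?_)
    rintro _ ⟨i, rfl⟩
    exact congrFun hp i
  have hcomp : (ev ∘ P) = fun n : ℕ => fun i => u i ^ (n + 1) - c ^ (n + 1) := by
    funext n i
    simp [ev, P]
  exact hcomp ▸ hP.map' ev hev

theorem linearIndependent_restrict_pow_sub_pow {S : Set (ℝ × ℝ)} {f h : ℝ → ℝ}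
    (hf : Continuous f) {x₀ x₁ y₀ : ℝ} (hseg : ∀ x ∈ uIcc x₀ x₁, (x, y₀) ∈ S)
    (hne : f x₀ ≠ f x₁) :
    LinearIndependent ℝ (fun n : ℕ => S.restrict (fun p => f p.1 ^ (n + 1) - h p.2 ^ (n + 1))) := by
  let σ : uIcc x₀ x₁ → S := fun x => ⟨(x, y₀), hseg x x.2⟩
  have hrange : (range fun x : uIcc x₀ x₁ => f x).Infinite := by
    refine (Icc_infinite (min_lt_max.2 hne)).mono ?_
    rw [range_comp' f, Subtype.range_coe]
    exact intermediate_value_uIcc hf.continuousOn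
  exact .of_comp (LinearMap.funLeft ℝ ℝ σ) (linearIndependent_pow_succ_sub_pow hrange (h y₀))

namespace EulerBaxter

variable {a b : ℝ}

def ebPoly (a b : ℝ) (p : ℝ × ℝ) : ℝ :=
  p.1 ^ 2 * p.2 ^ 2 + 1 + a * (p.1 ^ 2 + p.2 ^ 2) + 2 * b * p.1 * p.2

def ebDisc (a b x : ℝ) : ℝ := b ^ 2 * x ^ 2 - (x ^ 2 + a) * (1 + a * x ^ 2)

noncomputable def ebBranch (a b x : ℝ) : ℝ := (-b * x + √(ebDisc a b x)) / (x ^ 2 + a)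

noncomputable def johnI₁ (a b : ℝ) (p : ℝ × ℝ) : ℝ × ℝ := (p.1, -2 * b * p.1 / (p.1 ^ 2 + a) - p.2)

noncomputable def johnI₂ (a b : ℝ) (p : ℝ × ℝ) : ℝ × ℝ := (-2 * b * p.2 / (p.2 ^ 2 + a) - p.1, p.2)

theorem mem_EBcurve {p : ℝ × ℝ} : p ∈ EBcurve a b ↔ ebPoly a b p = 0 := Iff.rfl

theorem johnMap_apply (p : ℝ × ℝ) : johnMap a b p = johnI₂ a b (johnI₁ a b p) := rfl

theorem johnI₂_eq_swap (p : ℝ × ℝ) : johnI₂ a b p = (johnI₁ a b p.swap).swap := rfl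

theorem johnI₁_johnI₁ (p : ℝ × ℝ) : johnI₁ a b (johnI₁ a b p) = p := by
  simp only [johnI₁]
  exact Prod.ext rfl (by ring)

theorem johnI₂_johnI₂ (p : ℝ × ℝ) : johnI₂ a b (johnI₂ a b p) = p := by
  rw [johnI₂_eq_swap, johnI₂_eq_swap, Prod.swap_swap, johnI₁_johnI₁, Prod.swap_swap]

theorem johnMap_johnI₁ (p : ℝ × ℝ) : johnMap a b (johnI₁ a b p) = johnI₂ a b p := by
  rw [johnMap_apply, johnI₁_johnI₁]

theorem johnMap_johnI₁_johnMap (p : ℝ × ℝ) :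
    johnMap a b (johnI₁ a b (johnMap a b p)) = johnI₁ a b p := by
  rw [johnMap_johnI₁, johnMap_apply, johnI₂_johnI₂]

theorem contDiff_johnI₁ (ha : 0 < a) {n : WithTop ℕ∞} : ContDiff ℝ n (johnI₁ a b) :=
  contDiff_fst.prodMk <| (contDiff_const.mul contDiff_fst).div
    ((contDiff_fst.pow 2).add contDiff_const) (fun p => by positivity) |>.sub contDiff_snd

theorem contDiff_johnMap (ha : 0 < a) {n : WithTop ℕ∞} : ContDiff ℝ n (johnMap a b) := by
  have hI₂ : ContDiff ℝ n (johnI₂ a b) :=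
    ((contDiff_const.mul contDiff_snd).div ((contDiff_snd.pow 2).add contDiff_const)
      (fun p => by positivity) |>.sub contDiff_fst).prodMk contDiff_snd
  exact hI₂.comp (contDiff_johnI₁ ha)

theorem ebPoly_swap (p : ℝ × ℝ) : ebPoly a b p.swap = ebPoly a b p := by
  simp only [ebPoly, Prod.fst_swap, Prod.snd_swap]
  ring

theorem ebPoly_johnI₁ (ha : 0 < a) (p : ℝ × ℝ) : ebPoly a b (johnI₁ a b p) = ebPoly a b p := by
  have : p.1 ^ 2 + a ≠ 0 := by positivity
  simp only [ebPoly, johnI₁]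
  field_simp
  ring

theorem ebPoly_johnI₂ (ha : 0 < a) (p : ℝ × ℝ) : ebPoly a b (johnI₂ a b p) = ebPoly a b p := by
  rw [johnI₂_eq_swap, ebPoly_swap, ebPoly_johnI₁ ha, ebPoly_swap]

theorem swap_mem_EBcurve {p : ℝ × ℝ} : p.swap ∈ EBcurve a b ↔ p ∈ EBcurve a b := by
  rw [mem_EBcurve, mem_EBcurve, ebPoly_swap]

theorem johnI₁_mem_EBcurve (ha : 0 < a) {p : ℝ × ℝ} (hp : p ∈ EBcurve a b) :
    johnI₁ a b p ∈ EBcurve a b := by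
  rwa [mem_EBcurve, ebPoly_johnI₁ ha]

theorem johnMap_mem_EBcurve (ha : 0 < a) {p : ℝ × ℝ} (hp : p ∈ EBcurve a b) :
    johnMap a b p ∈ EBcurve a b := by
  rwa [mem_EBcurve, johnMap_apply, ebPoly_johnI₂ ha, ebPoly_johnI₁ ha]

theorem sq_eq_ebPoly_add_ebDisc (x y : ℝ) :
    ((x ^ 2 + a) * y + b * x) ^ 2 = (x ^ 2 + a) * ebPoly a b (x, y) + ebDisc a b x := by
  simp only [ebPoly, ebDisc]
  ring

theorem sq_eq_ebDisc_of_mem {x y : ℝ} (h : (x, y) ∈ EBcurve a b) :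
    ((x ^ 2 + a) * y + b * x) ^ 2 = ebDisc a b x := by
  rw [sq_eq_ebPoly_add_ebDisc, mem_EBcurve.1 h, mul_zero, zero_add]

theorem branch_eq_or_eq_johnI₁ (ha : 0 < a) {p : ℝ × ℝ} (hp : p ∈ EBcurve a b) :
    (p.1, ebBranch a b p.1) = p ∨ (p.1, ebBranch a b p.1) = johnI₁ a b p := by
  have hx : p.1 ^ 2 + a ≠ 0 := by positivity
  have hsq : |(p.1 ^ 2 + a) * p.2 + b * p.1| = √(ebDisc a b p.1) := by
    rw [← sq_eq_ebDisc_of_mem hp, Real.sqrt_sq_eq_abs]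
  rcases (abs_eq (Real.sqrt_nonneg _)).1 hsq with h | h
  · left
    refine Prod.ext rfl ?_
    simp only [ebBranch]
    field_simp
    linarith
  · right
    refine Prod.ext rfl ?_
    simp only [ebBranch, johnI₁]
    field_simp
    linarith

theorem ebDisc_pos_of_mem_of_mem (ha : 0 < a) {x y₁ y₂ : ℝ} (h₁ : (x, y₁) ∈ EBcurve a b)
    (h₂ : (x, y₂) ∈ EBcurve a b) (hne : y₁ ≠ y₂) : 0 < ebDisc a b x := by
  have hx : x ^ 2 + a ≠ 0 := by positivity
  by_contra! hD
  have hsq₁ := sq_eq_ebDisc_of_mem h₁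
  have hsq₂ := sq_eq_ebDisc_of_mem h₂
  have e₁ : (x ^ 2 + a) * y₁ + b * x = 0 := pow_eq_zero_iff two_ne_zero |>.1 (by nlinarith)
  have e₂ : (x ^ 2 + a) * y₂ + b * x = 0 := pow_eq_zero_iff two_ne_zero |>.1 (by nlinarith)
  exact hne (mul_left_cancel₀ hx (by linarith))

theorem continuous_ebBranch (ha : 0 < a) : Continuous (ebBranch a b) := by
  refine Continuous.div (by unfold ebDisc; fun_prop) (by fun_prop) fun x => ?_
  positivity

theorem contDiffAt_ebBranch (ha : 0 < a) {n : WithTop ℕ∞} {x : ℝ} (hx : 0 < ebDisc a b x) :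
    ContDiffAt ℝ n (ebBranch a b) x := by
  have hD : ContDiff ℝ n (ebDisc a b) := by unfold ebDisc; fun_prop
  refine ContDiffAt.div ?_ (by fun_prop) (by positivity)
  exact contDiffAt_const.mul contDiffAt_id |>.add <|
    (Real.contDiffAt_sqrt hx.ne').comp x hD.contDiffAt

section Domain

variable {Ω : Set (ℝ × ℝ)} (hop : IsOpen Ω) (hbd : Bornology.IsBounded Ω)
  (hfr : frontier Ω = EBcurve a b)
include hop hbd hfr

theorem exists_pos_add_smul_mem_EBcurve {z : ℝ × ℝ} (hz : z ∈ Ω) {v : ℝ × ℝ} (hv : v ≠ 0) :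
    ∃ t : ℝ, 0 < t ∧ z + t • v ∈ EBcurve a b :=
  hfr ▸ exists_pos_add_smul_mem_frontier hop hbd hz hv

theorem ebDisc_pos_of_mem (ha : 0 < a) {z : ℝ × ℝ} (hz : z ∈ Ω) :
    0 < ebDisc a b z.1 ∧ 0 < ebDisc a b z.2 := by
  obtain ⟨t₁, ht₁, h₁⟩ := exists_pos_add_smul_mem_EBcurve hop hbd hfr hz (v := (0, 1)) (by simp)
  obtain ⟨t₂, ht₂, h₂⟩ := exists_pos_add_smul_mem_EBcurve hop hbd hfr hz (v := (0, -1)) (by simp)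
  obtain ⟨t₃, ht₃, h₃⟩ := exists_pos_add_smul_mem_EBcurve hop hbd hfr hz (v := (1, 0)) (by simp)
  obtain ⟨t₄, ht₄, h₄⟩ := exists_pos_add_smul_mem_EBcurve hop hbd hfr hz (v := (-1, 0)) (by simp)
  rw [← swap_mem_EBcurve] at h₃ h₄
  constructor
  · refine ebDisc_pos_of_mem_of_mem ha (y₁ := z.2 + t₁) (y₂ := z.2 - t₂) ?_ ?_ (by linarith)
    · convert h₁ using 1; ext <;> simp
    · convert h₂ using 1; ext <;> simp [sub_eq_add_neg]
  · refine ebDisc_pos_of_mem_of_mem ha (y₁ := z.1 + t₃) (y₂ := z.1 - t₄) ?_ ?_ (by linarith)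
    · convert h₃ using 1; ext <;> simp
    · convert h₄ using 1; ext <;> simp [sub_eq_add_neg]

end Domain

def IsJohnInvariant (a b : ℝ) (V : ℝ × ℝ → ℝ) : Prop :=
  ∀ p ∈ EBcurve a b, V (johnI₁ a b p) = V p ∧ V (johnI₂ a b p) = V p

namespace IsJohnInvariant

variable {V : ℝ × ℝ → ℝ} (hV : IsJohnInvariant a b V)
include hV

theorem apply_branch_fst (ha : 0 < a) {p : ℝ × ℝ} (hp : p ∈ EBcurve a b) :
    V (p.1, ebBranch a b p.1) = V p := by
  rcases branch_eq_or_eq_johnI₁ ha hp with h | h <;> rw [h]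
  exact (hV p hp).1

theorem apply_branch_snd (ha : 0 < a) {p : ℝ × ℝ} (hp : p ∈ EBcurve a b) :
    V (ebBranch a b p.2, p.2) = V p := by
  rcases branch_eq_or_eq_johnI₁ ha (swap_mem_EBcurve.2 hp) with h | h
  · rw [show (ebBranch a b p.2, p.2) = p from congrArg Prod.swap h]
  · rw [show (ebBranch a b p.2, p.2) = johnI₂ a b p from congrArg Prod.swap h]
    exact (hV p hp).2

end IsJohnInvariant

theorem isDirichletSolution_sub {Ω : Set (ℝ × ℝ)} {F H : ℝ → ℝ} (hF : Continuous F)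
    (hH : Continuous H) (hF₂ : ∀ p ∈ Ω, ContDiffAt ℝ 2 F p.1)
    (hH₂ : ∀ p ∈ Ω, ContDiffAt ℝ 2 H p.2) (hC : ∀ p ∈ EBcurve a b, F p.1 = H p.2) :
    IsDirichletSolution a b Ω (fun p => F p.1 - H p.2) := by
  refine ⟨((hF.comp continuous_fst).sub (hH.comp continuous_snd)).continuousOn, fun p hp => ?_,
    fun p _ => ?_, fun p hp => sub_eq_zero.2 (hC p hp)⟩
  · exact (((hF₂ p hp).comp p contDiffAt_fst).sub
      ((hH₂ p hp).comp p contDiffAt_snd)).contDiffWithinAt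
  simp only [deriv_const_sub, deriv_const]

theorem IsJohnInvariant.isDirichletSolution (ha : 0 < a) {Ω : Set (ℝ × ℝ)} (hop : IsOpen Ω)
    (hbd : Bornology.IsBounded Ω) (hfr : frontier Ω = EBcurve a b) {V : ℝ × ℝ → ℝ}
    (hV : IsJohnInvariant a b V) (hVsmooth : ContDiff ℝ 2 V) {φ : ℝ → ℝ} (hφ : ContDiff ℝ 2 φ) :
    IsDirichletSolution a b Ω
      (fun p => φ (V (p.1, ebBranch a b p.1)) - φ (V (ebBranch a b p.2, p.2))) := by
  have hY := continuous_ebBranch (b := b) ha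
  have hVc := hVsmooth.continuous
  have hφc := hφ.continuous
  refine isDirichletSolution_sub (F := fun x => φ (V (x, ebBranch a b x)))
    (H := fun y => φ (V (ebBranch a b y, y))) (by fun_prop) (by fun_prop)
    (fun p hp => ?_) (fun p hp => ?_)
    fun p hp => by rw [hV.apply_branch_fst ha hp, hV.apply_branch_snd ha hp]
  · exact hφ.contDiffAt.comp _ <| hVsmooth.contDiffAt.comp _ <| contDiffAt_id.prodMk
      (contDiffAt_ebBranch ha (ebDisc_pos_of_mem hop hbd hfr ha hp).1)
  · exact hφ.contDiffAt.comp _ <| hVsmooth.contDiffAt.comp _ <|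
      (contDiffAt_ebBranch ha (ebDisc_pos_of_mem hop hbd hfr ha hp).2).prodMk contDiffAt_id

noncomputable def johnAverage (a b : ℝ) (N : ℕ) (w : ℝ × ℝ → ℝ) (p : ℝ × ℝ) : ℝ :=
  birkhoffSum (johnMap a b) w N p + birkhoffSum (johnMap a b) w N (johnI₁ a b p)

section Average

variable {N : ℕ} {w : ℝ × ℝ → ℝ}

theorem johnAverage_johnI₁ (p : ℝ × ℝ) :
    johnAverage a b N w (johnI₁ a b p) = johnAverage a b N w p := by
  rw [johnAverage, johnAverage, johnI₁_johnI₁, add_comm]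

theorem johnAverage_johnMap (ha : 0 < a)
    (hper : ∀ p ∈ EBcurve a b, IsPeriodicPt (johnMap a b) N p) {p : ℝ × ℝ}
    (hp : p ∈ EBcurve a b) : johnAverage a b N w (johnMap a b p) = johnAverage a b N w p := by
  have hq : johnI₁ a b (johnMap a b p) ∈ EBcurve a b :=
    johnI₁_mem_EBcurve ha (johnMap_mem_EBcurve ha hp)
  rw [johnAverage, johnAverage, (hper p hp).birkhoffSum_apply_eq,
    ← johnMap_johnI₁_johnMap p, (hper _ hq).birkhoffSum_apply_eq]

theorem isJohnInvariant_johnAverage (ha : 0 < a)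
    (hper : ∀ p ∈ EBcurve a b, IsPeriodicPt (johnMap a b) N p) :
    IsJohnInvariant a b (johnAverage a b N w) := fun p hp =>
  ⟨johnAverage_johnI₁ p, by
    rw [← johnMap_johnI₁, johnAverage_johnMap ha hper (johnI₁_mem_EBcurve ha hp),
      johnAverage_johnI₁]⟩

theorem contDiff_johnAverage (ha : 0 < a) {n : WithTop ℕ∞} (hw : ContDiff ℝ n w) :
    ContDiff ℝ n (johnAverage a b N w) := by
  have hTk (k : ℕ) : ContDiff ℝ n (johnMap a b)^[k] := by
    induction k with
    | zero => exact contDiff_id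
    | succ k ih => exact iterate_succ (johnMap a b) k ▸ ih.comp (contDiff_johnMap ha)
  have hsum : ContDiff ℝ n (birkhoffSum (johnMap a b) w N) :=
    ContDiff.sum fun k _ => hw.comp (hTk k)
  exact hsum.add (hsum.comp (contDiff_johnI₁ ha))

end Average

theorem exists_isJohnInvariant_vanishing_at (ha : 0 < a) {N : ℕ} (hN : N ≠ 0)
    (hper : ∀ p ∈ EBcurve a b, IsPeriodicPt (johnMap a b) N p) (p₀ : ℝ × ℝ) :
    ∃ V : ℝ × ℝ → ℝ, ContDiff ℝ 2 V ∧ IsJohnInvariant a b V ∧ V p₀ = 0 ∧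
      ∃ A : Set ℝ, A.Finite ∧ ∀ q : ℝ × ℝ, q.1 ∉ A → 0 < V q := by
  classical
  let A : Finset ℝ := (range N).image (fun k => ((johnMap a b)^[k] p₀).1) ∪
    (range N).image (fun k => ((johnMap a b)^[k] (johnI₁ a b p₀)).1)
  let w : ℝ × ℝ → ℝ := fun q => ∏ c ∈ A, (q.1 - c) ^ 2
  have hw_nonneg (q : ℝ × ℝ) : 0 ≤ w q := prod_nonneg fun c _ => sq_nonneg _
  have hw_zero (q : ℝ × ℝ) (hq : q.1 ∈ A) : w q = 0 := prod_eq_zero hq (by simp)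
  have hsum_nonneg (m : ℕ) (q : ℝ × ℝ) : 0 ≤ birkhoffSum (johnMap a b) w m q :=
    sum_nonneg fun k _ => hw_nonneg _
  refine ⟨johnAverage a b N w, contDiff_johnAverage ha (contDiff_prod fun c _ => by fun_prop),
    isJohnInvariant_johnAverage ha hper, ?_, A, A.finite_toSet, fun q hq => ?_⟩
  · refine add_eq_zero_iff_of_nonneg (hsum_nonneg _ _) (hsum_nonneg _ _) |>.2 ⟨?_, ?_⟩ <;>
      refine sum_eq_zero fun k hk => hw_zero _ ?_
    exacts [mem_union_left _ (mem_image_of_mem _ hk), mem_union_right _ (mem_image_of_mem _ hk)]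
  · have hwq : 0 < w q := prod_pos fun c hc => by
      have : q.1 - c ≠ 0 := sub_ne_zero.2 fun h => hq (h ▸ hc)
      positivity
    obtain ⟨n, rfl⟩ := Nat.exists_eq_succ_of_ne_zero hN
    rw [johnAverage, birkhoffSum_succ']
    linarith [hsum_nonneg n (johnMap a b q), hsum_nonneg (n + 1) (johnI₁ a b q)]

end EulerBaxter

open EulerBaxter

theorem dirichlet_infinite_solutions_general (a b : ℝ) (ha : 0 < a)
    (Ω : Set (ℝ × ℝ)) (hne : Ω.Nonempty) (hop : IsOpen Ω)
    (hbd : Bornology.IsBounded Ω) (hfr : frontier Ω = EBcurve a b)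
    (hper : ∃ N : ℕ, 1 ≤ N ∧ ∀ p ∈ EBcurve a b, (johnMap a b)^[N] p = p) :
    ∃ Φ : ℕ → ℝ × ℝ → ℝ, (∀ n : ℕ, IsDirichletSolution a b Ω (Φ n)) ∧
      LinearIndependent ℝ (fun n : ℕ => (closure Ω).restrict (Φ n)) := by
  obtain ⟨N, hN, hper⟩ := hper
  obtain ⟨z, hz⟩ := hne
  obtain ⟨t, -, hzt⟩ := exists_pos_add_smul_mem_EBcurve hop hbd hfr hz (v := (0, 1)) (by simp)
  obtain ⟨V, hVsmooth, hV, hVzt, A, hA, hVpos⟩ :=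
    exists_isJohnInvariant_vanishing_at ha (by omega) hper (z + t • (0, 1))
  obtain ⟨ε, hε, hball⟩ :=
    Metric.mem_nhds_iff.1 <| (hop.preimage (Continuous.prodMk_left z.2)).mem_nhds hz
  obtain ⟨x₁, hx₁, hx₁A⟩ := ((Ioo_infinite (by linarith : z.1 - ε < z.1 + ε)).sdiff hA).nonempty
  let f : ℝ → ℝ := fun x => V (x, ebBranch a b x)
  let h : ℝ → ℝ := fun y => V (ebBranch a b y, y)
  refine ⟨fun n p => f p.1 ^ (n + 1) - h p.2 ^ (n + 1), fun n => ?_, ?_⟩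
  · exact hV.isDirichletSolution ha hop hbd hfr hVsmooth (φ := (· ^ (n + 1))) (contDiff_id.pow _)
  refine linearIndependent_restrict_pow_sub_pow (x₀ := z.1) (x₁ := x₁)
      (hVsmooth.continuous.comp (continuous_id.prodMk (continuous_ebBranch ha)))
      (fun x hx => subset_closure (hball ?_)) ?_
  · rw [Real.ball_eq_Ioo]
    exact ordConnected_Ioo.uIcc_subset (mem_Ioo.2 ⟨by linarith, by linarith⟩) hx₁ hx
  · have h₀ : f z.1 = 0 := by
      have hfst : (z + t • ((0 : ℝ), (1 : ℝ))).1 = z.1 := by simp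
      rw [← hVzt, ← hV.apply_branch_fst ha hzt, hfst]
    exact h₀.trans_ne (hVpos _ hx₁A).ne

/-- Assume `a > 0` and `|b| > a + 1`, and let `Ω` be a nonempty bounded open
subset of `ℝ²` with frontier `C`. If the John map is periodic on `C`, then the
space of solutions of the homogeneous Dirichlet problem for the string equation
on `Ω` is infinite-dimensional: there is an infinite linearly independent family
of solutions (viewed as functions on the closure of `Ω`). -/
theorem dirichlet_infinite_solutions (a b : ℝ) (ha : 0 < a)
    (hb : a + 1 < |b|) (Ω : Set (ℝ × ℝ)) (hne : Ω.Nonempty) (hop : IsOpen Ω)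
    (hbd : Bornology.IsBounded Ω) (hfr : frontier Ω = EBcurve a b)
    (hper : ∃ N : ℕ, 1 ≤ N ∧ ∀ p ∈ EBcurve a b, (johnMap a b)^[N] p = p) :
    ∃ Φ : ℕ → ℝ × ℝ → ℝ, (∀ n : ℕ, IsDirichletSolution a b Ω (Φ n)) ∧
      LinearIndependent ℝ (fun n : ℕ => (closure Ω).restrict (Φ n)) :=
  dirichlet_infinite_solutions_general a b ha Ω hne hop hbd hfr hper
end
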